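/- Let φ ∈ F[x,y,z] be weight homogeneous with an isolated singularity and let u₀ = 1, u₁,…,u_{μ−1} be weight homogeneous polynomials whose images form a basis of A_sing. Then the zeroth Poisson homology of the surface algebra A_φ satisfies H₀(A_φ) ≅ A_sing; explicitly, A = {∇φ·(∇×f⃗) + φ·g : g ∈ A, f⃗ ∈ A³} ⊕ ⊕_{j=0}^{μ−1} F u_j. -/

import Mathlib

open MvPolynomial

noncomputable section

variable {F : Type*} [Field F] [CharZero F]

/-- The polynomial algebra A = F[x,y,z]. -/
abbrev P3 (F : Type*) [Field F] : Type _ := MvPolynomial (Fin 3) F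

/-- Gradient of a polynomial. -/
def grad (f : P3 F) : Fin 3 → P3 F := fun i => pderiv i f

/-- Divergence of a triple of polynomials. -/
def divg (v : Fin 3 → P3 F) : P3 F :=
  pderiv 0 (v 0) + pderiv 1 (v 1) + pderiv 2 (v 2)

/-- Curl of a triple of polynomials. -/
def curl (v : Fin 3 → P3 F) : Fin 3 → P3 F :=
  ![pderiv 1 (v 2) - pderiv 2 (v 1),
    pderiv 2 (v 0) - pderiv 0 (v 2),
    pderiv 0 (v 1) - pderiv 1 (v 0)]

/-- Cross product of two triples of polynomials. -/
def cross (v w : Fin 3 → P3 F) : Fin 3 → P3 F :=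
  ![v 1 * w 2 - v 2 * w 1, v 2 * w 0 - v 0 * w 2, v 0 * w 1 - v 1 * w 0]

/-- Inner (dot) product of two triples of polynomials. -/
def dot (v w : Fin 3 → P3 F) : P3 F := v 0 * w 0 + v 1 * w 1 + v 2 * w 2

/-- The weighted Euler vector field (ϖ₁x, ϖ₂y, ϖ₃z). -/
def eul (w : Fin 3 → ℕ) : Fin 3 → P3 F := fun i => (w i : P3 F) * X i

/-- The Jacobian ideal ⟨∂φ/∂x, ∂φ/∂y, ∂φ/∂z⟩. -/
def jacId (φ : P3 F) : Ideal (P3 F) :=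
  Ideal.span {pderiv 0 φ, pderiv 1 φ, pderiv 2 φ}

abbrev sing1 (i : Fin 3) : Fin 3 →₀ ℕ := Finsupp.single i 1

def polyInt (i : Fin 3) : P3 F →ₗ[F] P3 F where
  toFun p := (AddMonoidAlgebra.coeff p).sum fun s a => monomial (s + sing1 i) (a / ((s i : F) + 1))
  map_add' p q := by
    rw [show AddMonoidAlgebra.coeff (p + q) = AddMonoidAlgebra.coeff p + AddMonoidAlgebra.coeff q from rfl]
    exact Finsupp.sum_add_index' (fun s => by simp) (fun s a b => by rw [add_div, map_add])
  map_smul' r p := by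
    rw [show AddMonoidAlgebra.coeff (r • p) = r • AddMonoidAlgebra.coeff p from rfl]
    rw [RingHom.id_apply, Finsupp.smul_sum, Finsupp.sum_smul_index' (fun s => by simp)]
    exact Finsupp.sum_congr fun s _ => by
      rw [smul_eq_mul, mul_div_assoc, ← smul_eq_mul, map_smul]

lemma polyInt_monomial (i : Fin 3) (s : Fin 3 →₀ ℕ) (a : F) :
    polyInt i (monomial s a) = monomial (s + sing1 i) (a / ((s i : F) + 1)) := by
  unfold polyInt
  simp only [LinearMap.coe_mk, AddHom.coe_mk]
  rw [show AddMonoidAlgebra.coeff (monomial s a) = Finsupp.single s a from rfl]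
  exact Finsupp.sum_single_index (by simp)

lemma pderiv_polyInt (i : Fin 3) (p : P3 F) : pderiv i (polyInt i p) = p := by
  induction p using MvPolynomial.induction_on' with
  | add p q hp hq => rw [map_add, map_add, hp, hq]
  | monomial s a =>
    rw [polyInt_monomial, pderiv_monomial]
    have h1 : (s + sing1 i) - sing1 i = s := by
      ext j; simp [sing1]
    have h2 : (s + sing1 i) i = s i + 1 := by simp [sing1]
    rw [h1, h2]
    congr 1
    push_cast
    exact div_mul_cancel₀ a (Nat.cast_add_one_ne_zero (s i))

lemma pderiv_polyInt_comm (i j : Fin 3) (hij : j ≠ i) (p : P3 F) :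
    pderiv j (polyInt i p) = polyInt i (pderiv j p) := by
  induction p using MvPolynomial.induction_on' with
  | add p q hp hq => simp only [map_add, hp, hq]
  | monomial s a =>
    rw [polyInt_monomial, pderiv_monomial, pderiv_monomial, polyInt_monomial]
    have h1 : (s + sing1 i) - sing1 j
        = (s - Finsupp.single j 1) + sing1 i := by
      ext k
      simp only [sing1, Finsupp.tsub_apply, Finsupp.add_apply, Finsupp.single_apply]
      split_ifs <;> omega
    have h2 : (s + sing1 i) j = s j := by
      simp [sing1, Finsupp.single_eq_of_ne hij]
    have h3 : (s - sing1 j) i = s i := by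
      simp [Finsupp.tsub_apply, Finsupp.single_eq_of_ne (Ne.symm hij)]
    rw [h1, h2, h3]
    congr 1
    ring

lemma exists_curl (Z : Fin 3 → P3 F) (hZ : divg Z = 0) : ∃ v : Fin 3 → P3 F, curl v = Z := by
  have h20 : (2 : Fin 3) ≠ 0 := by decide
  have h21 : (2 : Fin 3) ≠ 1 := by decide
  refine ⟨![polyInt 2 (Z 1),
            -(polyInt 2 (Z 0)) + polyInt 0 (Z 2 - polyInt 2 (pderiv 2 (Z 2))), 0], ?_⟩
  have hI2 := congrArg (polyInt (2 : Fin 3)) hZ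
  rw [divg, map_add, map_add, map_zero] at hI2
  funext i
  fin_cases i
  · show pderiv 1 (0 : P3 F) - pderiv 2 (-(polyInt 2 (Z 0))
      + polyInt 0 (Z 2 - polyInt 2 (pderiv 2 (Z 2)))) = Z 0
    rw [map_zero, map_add, map_neg, pderiv_polyInt,
      pderiv_polyInt_comm 0 2 h20, map_sub, pderiv_polyInt, sub_self, map_zero]
    ring
  · show pderiv 2 (polyInt 2 (Z 1)) - pderiv 0 (0 : P3 F) = Z 1
    rw [pderiv_polyInt, map_zero, sub_zero]
  · show pderiv 0 (-(polyInt 2 (Z 0))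
      + polyInt 0 (Z 2 - polyInt 2 (pderiv 2 (Z 2)))) - pderiv 1 (polyInt 2 (Z 1)) = Z 2
    rw [map_add, map_neg, pderiv_polyInt_comm 2 0 (Ne.symm h20),
      pderiv_polyInt, pderiv_polyInt_comm 2 1 (Ne.symm h21)]
    linear_combination -hI2

/-- The weighted Euler operator E·∇. -/
def eop (w : Fin 3 → ℕ) (p : P3 F) : P3 F :=
  (w 0 : P3 F) * (X 0 * pderiv 0 p) + (w 1 : P3 F) * (X 1 * pderiv 1 p)
    + (w 2 : P3 F) * (X 2 * pderiv 2 p)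

lemma eop_add (w : Fin 3 → ℕ) (p q : P3 F) : eop w (p + q) = eop w p + eop w q := by
  simp only [eop, map_add]; ring

lemma natCast_mul_monomial (n : ℕ) (s : Fin 3 →₀ ℕ) (a : F) :
    (n : P3 F) * monomial s a = monomial s ((n : F) * a) := by
  rw [← map_natCast (C : F →+* P3 F), C_mul_monomial]

lemma X_mul_pderiv_monomial (i : Fin 3) (s : Fin 3 →₀ ℕ) (a : F) :
    X i * pderiv i (monomial s a) = ((s i : ℕ) : P3 F) * monomial s a := by
  rw [pderiv_monomial, natCast_mul_monomial]
  rcases Nat.eq_zero_or_pos (s i) with h | h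
  · simp [h]
  · have hs : (sing1 i) + (s - sing1 i) = s := by
      ext k; simp only [sing1, Finsupp.add_apply, Finsupp.tsub_apply, Finsupp.single_apply]
      split_ifs with hk <;> [subst hk; skip] <;> omega
    rw [X, monomial_mul, hs, one_mul, mul_comm (a) ((s i : F))]

lemma weight_eq (w : Fin 3 → ℕ) (s : Fin 3 →₀ ℕ) :
    Finsupp.weight w s = s 0 * w 0 + s 1 * w 1 + s 2 * w 2 := by
  rw [Finsupp.weight_apply, Finsupp.sum_fintype _ _ (fun i => zero_smul ℕ (w i)),
    Fin.sum_univ_three]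
  simp [mul_comm]

lemma eop_monomial (w : Fin 3 → ℕ) (s : Fin 3 →₀ ℕ) (a : F) :
    eop w (monomial s a) = ((Finsupp.weight w s : ℕ) : P3 F) * monomial s a := by
  rw [eop, _root_.X_mul_pderiv_monomial, _root_.X_mul_pderiv_monomial, _root_.X_mul_pderiv_monomial, weight_eq]
  push_cast
  ring

lemma eop_homog (w : Fin 3 → ℕ) (r : ℕ) (φ : P3 F) (hφ : φ.IsWeightedHomogeneous w r) :
    eop w φ = (r : P3 F) * φ := by
  conv_lhs => rw [φ.as_sum]
  have hsum : ∀ (A : Finset (Fin 3 →₀ ℕ)) (f : (Fin 3 →₀ ℕ) → P3 F),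
      eop w (∑ s ∈ A, f s) = ∑ s ∈ A, eop w (f s) := by
    intro A f
    induction A using Finset.induction_on with
    | empty => simp [eop]
    | insert _ _ hni ih => rw [Finset.sum_insert hni, Finset.sum_insert hni, eop_add, ih]
  rw [hsum]
  conv_rhs => rw [φ.as_sum, Finset.mul_sum]
  refine Finset.sum_congr rfl fun s hs => ?_
  rw [eop_monomial, hφ (mem_support_iff.mp hs)]

lemma eop_surj (w : Fin 3 → ℕ) (hw : 0 < w 0) (b : P3 F) :
    ∃ c : P3 F, eop w c + ((w 0 + w 1 + w 2 : ℕ) : P3 F) * c = b := by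
  induction b using MvPolynomial.induction_on' with
  | add p q hp hq =>
    obtain ⟨c1, h1⟩ := hp; obtain ⟨c2, h2⟩ := hq
    exact ⟨c1 + c2, by rw [eop_add]; linear_combination h1 + h2⟩
  | monomial s a =>
    refine ⟨monomial s (a / ((Finsupp.weight w s + (w 0 + w 1 + w 2) : ℕ) : F)), ?_⟩
    rw [eop_monomial, natCast_mul_monomial, natCast_mul_monomial, ← map_add]
    have hne : (((Finsupp.weight w s : ℕ) + (w 0 + w 1 + w 2) : ℕ) : F) ≠ 0 :=
      Nat.cast_ne_zero.mpr (by omega)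
    congr 1
    push_cast at hne ⊢
    field_simp

lemma pderiv_mem_jacId (φ : P3 F) (i : Fin 3) : pderiv i φ ∈ jacId φ := by
  apply Ideal.subset_span
  fin_cases i <;> simp

lemma pderiv_natCast_mul (i : Fin 3) (n : ℕ) (q : P3 F) :
    pderiv i ((n : P3 F) * q) = (n : P3 F) * pderiv i q := by
  rw [← map_natCast (C : F →+* P3 F), pderiv_C_mul]

lemma phi_mem_jacId (w : Fin 3 → ℕ) (hw : ∀ i, 0 < w i) (φ : P3 F)
    (hhom : ∃ r : ℕ, φ.IsWeightedHomogeneous w r)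
    (hsing : FiniteDimensional F (P3 F ⧸ jacId φ)) : φ ∈ jacId φ := by
  obtain ⟨r, hr⟩ := hhom
  rcases Nat.eq_zero_or_pos r with hr0 | hrpos
  · -- r = 0 : φ is constant, jacId = ⊥, contradiction with hsing
    exfalso
    subst hr0
    have : Finsupp.NonTorsionWeight ℕ w :=
      Finsupp.nonTorsionWeight_of ℕ (w := w) fun i => (hw i).ne'
    have hφC : φ = monomial 0 (coeff 0 φ) := by
      apply MvPolynomial.ext
      intro d
      rcases eq_or_ne d 0 with rfl | hd
      · simp [coeff_monomial]
      · rw [coeff_monomial, if_neg (fun h => hd h.symm)]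
        by_contra hc
        exact hd ((Finsupp.weight_eq_zero_iff_eq_zero w).mp (hr hc))
    have hjac : jacId φ = ⊥ := by
      have hp : ∀ i : Fin 3, pderiv i φ = 0 := by
        intro i; rw [hφC, pderiv_monomial]; simp
      rw [jacId, hp 0, hp 1, hp 2]
      simp
    have hinj : Function.Injective
        ((Ideal.Quotient.mkₐ F (jacId φ)).toLinearMap : P3 F →ₗ[F] P3 F ⧸ jacId φ) := by
      intro x y hxy
      simp only [AlgHom.toLinearMap_apply, Ideal.Quotient.mkₐ_eq_mk] at hxy
      have := Ideal.Quotient.eq.mp hxy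
      rw [hjac, Submodule.mem_bot, sub_eq_zero] at this
      exact this
    have hfd : FiniteDimensional F (P3 F) := FiniteDimensional.of_injective _ hinj
    have : Fintype ((Fin 3) →₀ ℕ) :=
      FiniteDimensional.fintypeBasisIndex (MvPolynomial.basisMonomials (Fin 3) F)
    have : Infinite ((Fin 3) →₀ ℕ) :=
      Infinite.of_injective (fun n => Finsupp.single 0 n) (Finsupp.single_injective 0)
    exact not_finite ((Fin 3) →₀ ℕ)
  · have heul := eop_homog w r φ hr
    have hmem : eop w φ ∈ jacId φ := by
      rw [eop]
      exact add_mem (add_mem (Ideal.mul_mem_left _ _ (Ideal.mul_mem_left _ _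
          (pderiv_mem_jacId φ 0))) (Ideal.mul_mem_left _ _ (Ideal.mul_mem_left _ _
          (pderiv_mem_jacId φ 1)))) (Ideal.mul_mem_left _ _ (Ideal.mul_mem_left _ _
          (pderiv_mem_jacId φ 2)))
    rw [heul] at hmem
    have : φ = C ((r : F)⁻¹) * ((r : P3 F) * φ) := by
      rw [← mul_assoc, ← map_natCast (C : F →+* P3 F) r, ← map_mul,
        inv_mul_cancel₀ (Nat.cast_ne_zero.mpr hrpos.ne' : (r : F) ≠ 0), map_one, one_mul]
    nth_rewrite 2 [this]
    exact Ideal.mul_mem_left _ _ hmem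

/-- H₀(A_φ) ≅ A_sing: the algebra A decomposes as the direct sum of
{∇φ·(∇×f⃗) + φ g} and ⊕_j F u_j, where the u_j induce a basis of A_sing. -/
theorem statement19 (w : Fin 3 → ℕ) (hw : ∀ i, 0 < w i) (φ : P3 F)
    (hhom : ∃ r : ℕ, φ.IsWeightedHomogeneous w r)
    (hsing : FiniteDimensional F (P3 F ⧸ jacId φ))
    (μ : ℕ) (hμ : 0 < μ) (u : Fin μ → P3 F) (hu0 : u ⟨0, hμ⟩ = 1)
    (huhom : ∀ j, ∃ r : ℕ, (u j).IsWeightedHomogeneous w r)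
    (hind : LinearIndependent F fun j => Ideal.Quotient.mk (jacId φ) (u j))
    (hspan : Submodule.span F
        (Set.range fun j => Ideal.Quotient.mk (jacId φ) (u j)) = ⊤) :
    (∀ f : P3 F, ∃ (v : Fin 3 → P3 F) (g : P3 F) (c : Fin μ → F),
      f = dot (grad φ) (curl v) + φ * g + ∑ j, C (c j) * u j) ∧
    (∀ (v : Fin 3 → P3 F) (g : P3 F) (c : Fin μ → F),
      dot (grad φ) (curl v) + φ * g = ∑ j, C (c j) * u j →
      ∀ j, c j = 0) := by
  obtain ⟨r, hr⟩ := hhom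
  have heul := eop_homog w r φ hr
  have key : ∀ (c : Fin μ → F) (j : Fin μ),
      c j • Ideal.Quotient.mk (jacId φ) (u j)
        = Ideal.Quotient.mk (jacId φ) (C (c j) * u j) := fun c j => by
    rw [← MvPolynomial.smul_eq_C_mul, ← Ideal.Quotient.mkₐ_eq_mk F, map_smul]
  constructor
  · intro f
    -- coefficients of f in the basis of A_sing
    have hf : Ideal.Quotient.mk (jacId φ) f ∈ Submodule.span F
        (Set.range fun j => Ideal.Quotient.mk (jacId φ) (u j)) := by
      rw [hspan]; trivial
    obtain ⟨c, hc⟩ := (Submodule.mem_span_range_iff_exists_fun F).mp hf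
    have hh : f - ∑ j, C (c j) * u j ∈ jacId φ := by
      refine Ideal.Quotient.eq_zero_iff_mem.mp ?_
      rw [map_sub, map_sum]
      simp_rw [← key]
      rw [hc, sub_self]
    rw [jacId, Ideal.mem_span_insert] at hh
    obtain ⟨a0, z, hz, hdec⟩ := hh
    rw [Ideal.mem_span_pair] at hz
    obtain ⟨a1, a2, hz⟩ := hz
    rw [← hz] at hdec
    -- hdec : f - ∑ = a0 * d0 + (a1 * d1 + a2 * d2)
    obtain ⟨c', hc'⟩ := eop_surj w (hw 0)
      (-(pderiv 0 a0 + pderiv 1 a1 + pderiv 2 a2))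
    simp only [eop] at hc'
    set Z : Fin 3 → P3 F :=
      ![a0 + (w 0 : P3 F) * (X 0 * c'),
        a1 + (w 1 : P3 F) * (X 1 * c'),
        a2 + (w 2 : P3 F) * (X 2 * c')] with hZdef
    have hdiv : divg Z = 0 := by
      show pderiv 0 (a0 + (w 0 : P3 F) * (X 0 * c'))
          + pderiv 1 (a1 + (w 1 : P3 F) * (X 1 * c'))
          + pderiv 2 (a2 + (w 2 : P3 F) * (X 2 * c')) = 0
      have hpc : ∀ (i : Fin 3) (n : ℕ), (pderiv i) ((n : ℕ) : P3 F) = 0 := fun i n => by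
        rw [← map_natCast (C : F →+* P3 F)]; exact pderiv_C
      simp only [map_add, pderiv_mul, hpc, pderiv_X_self, zero_mul, mul_zero,
        add_zero, zero_add, mul_one, one_mul]
      push_cast at hc' ⊢
      linear_combination hc'
    obtain ⟨v, hv⟩ := exists_curl Z hdiv
    refine ⟨v, -((r : P3 F) * c'), c, ?_⟩
    rw [hv]
    show f = (pderiv 0 φ * (a0 + (w 0 : P3 F) * (X 0 * c'))
        + pderiv 1 φ * (a1 + (w 1 : P3 F) * (X 1 * c'))
        + pderiv 2 φ * (a2 + (w 2 : P3 F) * (X 2 * c')))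
        + φ * -((r : P3 F) * c') + ∑ j, C (c j) * u j
    simp only [eop] at heul
    linear_combination hdec - c' * heul
  · intro v g c heq j
    have hφmem := phi_mem_jacId w hw φ ⟨r, hr⟩ hsing
    have hmem : (∑ j, C (c j) * u j) ∈ jacId φ := by
      rw [← heq]
      refine add_mem ?_ (Ideal.mul_mem_right g _ hφmem)
      show pderiv 0 φ * curl v 0 + pderiv 1 φ * curl v 1 + pderiv 2 φ * curl v 2 ∈ jacId φ
      exact add_mem (add_mem (Ideal.mul_mem_right _ _ (pderiv_mem_jacId φ 0))
        (Ideal.mul_mem_right _ _ (pderiv_mem_jacId φ 1)))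
        (Ideal.mul_mem_right _ _ (pderiv_mem_jacId φ 2))
    have hzero : ∑ j, c j • Ideal.Quotient.mk (jacId φ) (u j) = 0 := by
      simp_rw [key]
      rw [← map_sum]
      exact Ideal.Quotient.eq_zero_iff_mem.mpr hmem
    exact Fintype.linearIndependent_iff.mp hind c hzero j
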